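/- arXiv:math/9904038 — 4 statements merged into one kernel-verified Lean document; each statement's English description precedes it below -/
import Mathlib

section
/- Let G be a simplicial group and x, y ∈ NG_1. Then p_1(p_0([s_0 x, s_1 y])) = [s_0 x, s_1 y]·[s_1 y, s_1 x], where p_j(z) = z·s_j d_j(z)^{-1}. In particular the Peiffer pairing F_{(0)(1)}(x,y) := p_1 p_0([s_0 x, s_1 y]) equals [s_0 x, s_1 y]·[s_1 y, s_1 x] and lies in NG_2. -/
/-- A simplicial group: groups `G n` with face maps `d n i : G (n+1) →* G n`
and degeneracies `s n i : G n →* G (n+1)` satisfying the simplicial identities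
(asserted in the meaningful index ranges). -/
structure SGrp where
  G : ℕ → Type
  grp : ∀ n, Group (G n)
  d : (n : ℕ) → ℕ → (G (n+1) →* G n)
  s : (n : ℕ) → ℕ → (G n →* G (n+1))
  dd : ∀ n i j, i < j → j ≤ n + 2 → ∀ x,
    d n i (d (n+1) j x) = d n (j-1) (d (n+1) i x)
  ds_lt : ∀ n i j, i < j → j ≤ n + 1 → ∀ x,
    d (n+1) i (s (n+1) j x) = s n (j-1) (d n i x)
  ds_eq : ∀ n j, j ≤ n → ∀ x, d n j (s n j x) = x
  ds_succ : ∀ n j, j ≤ n → ∀ x, d n (j+1) (s n j x) = x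
  ds_gt : ∀ n i j, j + 1 < i → i ≤ n + 2 → ∀ x,
    d (n+1) i (s (n+1) j x) = s n j (d n (i-1) x)
  ss : ∀ n i j, i ≤ j → j ≤ n → ∀ x,
    s (n+1) i (s n j x) = s (n+1) (j+1) (s n i x)

attribute [instance] SGrp.grp

/-- Moore complex: `NG 0 = G 0`, `NG (n+1) = ⋂_{i ≤ n} ker (d_i)`. -/
def SGrp.NG (X : SGrp) : (n : ℕ) → Subgroup (X.G n)
  | 0 => ⊤
  | (n+1) => ⨅ i ∈ Finset.range (n+1), (X.d n i).ker

/-- Transport along an equality of dimensions. -/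
def SGrp.castHom (X : SGrp) {a b : ℕ} (h : a = b) : X.G a →* X.G b where
  toFun x := h ▸ x
  map_one' := by subst h; rfl
  map_mul' x y := by subst h; rfl

/-- Composite degeneracy `s_α = s_{i_l} ⋯ s_{i_1}` for `α = [i_l, …, i_1]`
(head applied last). -/
def SGrp.sComp (X : SGrp) : (m : ℕ) → (α : List ℕ) → (X.G m →* X.G (m + α.length))
  | _, [] => MonoidHom.id _
  | m, i :: rest => (X.s (m + rest.length) i).comp (X.sComp m rest)

/-- `s_α : G_{n-#α} →* G_n` for `α ∈ S(n)` (the trivial hom if lengths mismatch). -/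
def SGrp.sMapN (X : SGrp) (n : ℕ) (α : List ℕ) : X.G (n - α.length) →* X.G n :=
  if h : n - α.length + α.length = n then
    (X.castHom h).comp (X.sComp (n - α.length) α) else 1

/-- `p_j(z) = z ⬝ (s_j d_j z)⁻¹` on `G (n+1)`. -/
def SGrp.p (X : SGrp) (n j : ℕ) (z : X.G (n+1)) : X.G (n+1) :=
  z * (X.s n j (X.d n j z))⁻¹

/-- `pComp n j = p_j ∘ ⋯ ∘ p_0` on `G (n+1)`. -/
def SGrp.pComp (X : SGrp) (n : ℕ) : ℕ → X.G (n+1) → X.G (n+1)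
  | 0 => X.p n 0
  | (j+1) => fun z => X.p n (j+1) (X.pComp n j z)

/-- `pComp1 n l = p_l ∘ ⋯ ∘ p_1` on `G (n+1)` (identity for `l = 0`). -/
def SGrp.pComp1 (X : SGrp) (n : ℕ) : ℕ → X.G (n+1) → X.G (n+1)
  | 0 => id
  | (j+1) => fun z => X.p n (j+1) (X.pComp1 n j z)

/-- The ordering of `S(n)` from the paper: `α < β` iff comparing from the
smallest indices (the reversed lists), either the first difference has the
index of `α` larger, or `α`'s indices (from the small end) form a proper
prefix of `β`'s. -/
def Slt (α β : List ℕ) : Prop := List.Lex (· > ·) α.reverse β.reverse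

/-- `α` represents a nonidentity element of `S(N)`: a nonempty strictly
decreasing tuple of indices `< N`. -/
def SIdx (N : ℕ) (α : List ℕ) : Prop :=
  α ≠ [] ∧ α.Chain' (· > ·) ∧ α.length ≤ N ∧ ∀ i ∈ α, i < N

open scoped commutatorElement

/- The 0-face of `[s₀x, s₁y]` is `[x, s₀d₀y] = 1`, so `p₀` fixes it, and `p₁` multiplies it by
`s₁[x, y]⁻¹ = [s₁y, s₁x]`. Membership in `NG₂` holds for `p₁p₀ z` with any `z`: `p_j` kills `d_j`
and, since `d_i s_j d_j = s_{j-1} d_{j-1} d_i` for `i < j`, preserves the vanishing of the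
earlier faces. -/

namespace SGrp

variable (X : SGrp)

theorem p_eq_self_of_d_eq_one {n j : ℕ} {z : X.G (n+1)} (h : X.d n j z = 1) :
    X.p n j z = z := by
  rw [p, h, map_one, inv_one, mul_one]

theorem d_p_self {n j : ℕ} (hj : j ≤ n) (z : X.G (n+1)) : X.d n j (X.p n j z) = 1 := by
  rw [p, map_mul, map_inv, X.ds_eq n j hj, mul_inv_cancel]

theorem d_p_of_lt : ∀ {n i j : ℕ}, i < j → j ≤ n → ∀ {z : X.G (n+1)},
    X.d n i z = 1 → X.d n i (X.p n j z) = 1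
  | 0, _, _, hij, hj, _, _ => absurd hij (by omega)
  | m+1, i, j, hij, hj, z, hz => by
    rw [p, map_mul, map_inv, X.ds_lt m i j hij hj, X.dd m i j hij (by omega), hz,
      map_one, map_one, inv_one, mul_one]

theorem d_pComp {n : ℕ} (z : X.G (n+1)) :
    ∀ {i j : ℕ}, i ≤ j → j ≤ n → X.d n i (X.pComp n j z) = 1
  | i, 0, hi, hj => by
    obtain rfl : i = 0 := by omega
    exact X.d_p_self hj z
  | i, j+1, hi, hj => by
    rcases hi.lt_or_eq with hi | rfl
    · exact X.d_p_of_lt hi hj (d_pComp z (by omega) (by omega))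
    · exact X.d_p_self hj _

theorem pComp_mem_NG (n : ℕ) (z : X.G (n+1)) : X.pComp n n z ∈ X.NG (n+1) := by
  simp only [NG, Subgroup.mem_iInf, Finset.mem_range, MonoidHom.mem_ker]
  exact fun i hi => X.d_pComp z (by omega) le_rfl

end SGrp

theorem stmt6_general (X : SGrp) (x y : X.G 1)
    (hy : X.d 0 0 y = 1) :
    X.p 1 1 (X.p 1 0 ⁅X.s 1 0 x, X.s 1 1 y⁆) =
      ⁅X.s 1 0 x, X.s 1 1 y⁆ * ⁅X.s 1 1 y, X.s 1 1 x⁆ ∧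
    X.p 1 1 (X.p 1 0 ⁅X.s 1 0 x, X.s 1 1 y⁆) ∈ X.NG 2 := by
  have hd0 : X.d 1 0 ⁅X.s 1 0 x, X.s 1 1 y⁆ = 1 := by
    rw [map_commutatorElement, X.ds_lt 0 0 1 (by omega) le_rfl, hy, map_one,
      commutatorElement_one_right]
  have hd1 : X.d 1 1 ⁅X.s 1 0 x, X.s 1 1 y⁆ = ⁅x, y⁆ := by
    rw [map_commutatorElement, X.ds_succ 1 0 (by omega), X.ds_eq 1 1 le_rfl]
  refine ⟨?_, X.pComp_mem_NG 1 _⟩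
  rw [X.p_eq_self_of_d_eq_one hd0, SGrp.p, hd1, map_commutatorElement, commutatorElement_inv]

/-- for `x, y ∈ NG_1`, `p₁(p₀([s₀x, s₁y])) = [s₀x,s₁y]·[s₁y,s₁x]`,
so the Peiffer pairing `F_{(0)(1)}(x,y) := p₁p₀([s₀x,s₁y])` equals this product
of commutators and lies in `NG_2`. -/
theorem stmt6 (X : SGrp) (x y : X.G 1)
    (hx : X.d 0 0 x = 1) (hy : X.d 0 0 y = 1) :
    X.p 1 1 (X.p 1 0 ⁅X.s 1 0 x, X.s 1 1 y⁆) =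
      ⁅X.s 1 0 x, X.s 1 1 y⁆ * ⁅X.s 1 1 y, X.s 1 1 x⁆ ∧
    X.p 1 1 (X.p 1 0 ⁅X.s 1 0 x, X.s 1 1 y⁆) ∈ X.NG 2 :=
  stmt6_general X x y hy
end

section
/- Let G be a simplicial group and let α = (i_l,…,i_1), β = (j_m,…,j_1) ∈ S(n) with α ∩ β = (k_t,…,k_1) nonempty. Then for x ∈ NG_{n−#α} and y ∈ NG_{n−#β}, the element s_α(x)·s_β(y)·s_α(x)^{-1} can be written as s_{k_t}⋯s_{k_1}(z) for some z ∈ G_{n−t} of the form z = s_{ᾱ}(x)·s_{β̄}(y)·s_{ᾱ}(x)^{-1}, where ᾱ, β̄ ∈ S(n−t) satisfy ᾱ ∩ β̄ = ∅, #ᾱ = #α − t, and #β̄ = #β − t. -/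
section Aux

/-- Remove the first occurrence of `k`, decrementing earlier (larger) entries. -/
def pull (k : ℕ) : List ℕ → List ℕ
  | [] => []
  | a :: rest => if a = k then rest else (a - 1) :: pull k rest

def pulls : List ℕ → List ℕ → List ℕ
  | [], α => α
  | k :: rest, α => pulls rest (pull k α)

theorem pull_length {k : ℕ} : ∀ {α : List ℕ}, k ∈ α → (pull k α).length + 1 = α.length
  | a :: rest, h => by
    by_cases hak : a = k
    · simp [pull, hak]
    · have hk : k ∈ rest := by
        rcases List.mem_cons.mp h with h | h
        · exact absurd h.symm hak
        · exact h
      simp only [pull, if_neg hak, List.length_cons, pull_length hk]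

theorem pull_mem {k : ℕ} : ∀ {α : List ℕ}, α.Pairwise (· > ·) → k ∈ α →
    ∀ i, (i ∈ pull k α ↔ (k ≤ i ∧ i + 1 ∈ α) ∨ (i < k ∧ i ∈ α))
  | a :: rest, hp, hk, i => by
    have hrest : ∀ j ∈ rest, a > j := fun j hj => (List.pairwise_cons.mp hp).1 j hj
    by_cases hak : a = k
    · subst hak
      simp only [pull, if_pos rfl, List.mem_cons]
      constructor
      · intro h
        exact Or.inr ⟨hrest i h, Or.inr h⟩
      · rintro (⟨hki, (h1 | h1)⟩ | ⟨hik, (h1 | h1)⟩)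
        · omega
        · have := hrest _ h1; omega
        · omega
        · exact h1
    · have hk' : k ∈ rest := by
        rcases List.mem_cons.mp hk with h | h
        · exact absurd h.symm hak
        · exact h
      have hka : k < a := hrest k hk'
      have IH := pull_mem (List.pairwise_cons.mp hp).2 hk' i
      simp only [pull, if_neg hak, List.mem_cons, IH]
      constructor
      · rintro (h | (⟨h1, h2⟩ | ⟨h1, h2⟩))
        · subst h; exact Or.inl ⟨by omega, Or.inl (by omega)⟩
        · exact Or.inl ⟨h1, Or.inr h2⟩
        · exact Or.inr ⟨h1, Or.inr h2⟩
      · rintro (⟨h1, (h2 | h2)⟩ | ⟨h1, (h2 | h2)⟩)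
        · exact Or.inl (by omega)
        · exact Or.inr (Or.inl ⟨h1, h2⟩)
        · omega
        · exact Or.inr (Or.inr ⟨h1, h2⟩)

theorem pull_pairwise {k : ℕ} : ∀ {α : List ℕ}, α.Pairwise (· > ·) → k ∈ α →
    (pull k α).Pairwise (· > ·)
  | a :: rest, hp, hk => by
    have hrest : ∀ j ∈ rest, a > j := fun j hj => (List.pairwise_cons.mp hp).1 j hj
    have hpr := (List.pairwise_cons.mp hp).2
    by_cases hak : a = k
    · simpa [pull, hak] using hpr
    · have hk' : k ∈ rest := by
        rcases List.mem_cons.mp hk with h | h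
        · exact absurd h.symm hak
        · exact h
      have hka : k < a := hrest k hk'
      simp only [pull, if_neg hak, List.pairwise_cons]
      refine ⟨fun j hj => ?_, pull_pairwise hpr hk'⟩
      rcases (pull_mem hpr hk' j).mp hj with ⟨h1, h2⟩ | ⟨h1, h2⟩
      · have := hrest _ h2; omega
      · have := hrest _ h2; omega

theorem pull_bound {k M : ℕ} {α : List ℕ} (hp : α.Pairwise (· > ·)) (hk : k ∈ α)
    (hb : ∀ i ∈ α, i < M) : ∀ i ∈ pull k α, i + 1 < M := by
  intro i hi
  have hkM : k < M := hb k hk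
  rcases (pull_mem hp hk i).mp hi with ⟨h1, h2⟩ | ⟨h1, h2⟩
  · exact hb _ h2
  · have := hb _ h2; omega

end Aux

namespace SGrp

theorem castHom_castHom (X : SGrp) {a b c : ℕ} (h1 : a = b) (h2 : b = c) (x : X.G a) :
    X.castHom h2 (X.castHom h1 x) = X.castHom (h1.trans h2) x := by
  subst h1; subst h2; rfl

theorem castHom_rfl (X : SGrp) {a : ℕ} (h : a = a) (x : X.G a) : X.castHom h x = x := rfl

theorem s_cast (X : SGrp) {a b : ℕ} (h : a = b) (i : ℕ) (x : X.G a) :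
    X.s b i (X.castHom h x) = X.castHom (by rw [h]) (X.s a i x) := by
  subst h; rfl

theorem sComp_cast (X : SGrp) {a b : ℕ} (h : a = b) (α : List ℕ) (x : X.G a) :
    X.sComp b α (X.castHom h x) = X.castHom (by rw [h]) (X.sComp a α x) := by
  subst h; rfl

theorem cast_s_cast (X : SGrp) {A B C : ℕ} (hAB : A = B) (i : ℕ) (w : X.G A)
    (p1 : B + 1 = C) (p2 : A + 1 = C) :
    X.castHom p1 (X.s B i (X.castHom hAB w)) = X.castHom p2 (X.s A i w) := by
  subst hAB; rfl

/-- Single pull factorization: `s_α = s_k ∘ s_{pull k α}`. -/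
theorem pullA (X : SGrp) {k : ℕ} : ∀ (α : List ℕ) (m : ℕ) (α' : List ℕ),
    pull k α = α' → α.Pairwise (· > ·) →
    ∀ (hk : k ∈ α), (∀ i ∈ α, i < m + α.length) →
    ∀ (hlen : α'.length + 1 = α.length) (x : X.G m),
    X.sComp m α x = X.castHom (by omega)
      (X.s (m + α'.length) k (X.sComp m α' x))
  | a :: rest, m, α', hpull, hp, hk, hb, hlen, x => by
    have hrest : ∀ j ∈ rest, a > j := fun j hj => (List.pairwise_cons.mp hp).1 j hj
    have hpr := (List.pairwise_cons.mp hp).2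
    by_cases hak : a = k
    · subst hak
      simp only [pull, if_pos rfl] at hpull
      subst hpull
      exact (X.castHom_rfl _ _).symm
    · have hk' : k ∈ rest := by
        rcases List.mem_cons.mp hk with h | h
        · exact absurd h.symm hak
        · exact h
      simp only [pull, if_neg hak] at hpull
      subst hpull
      have hka : k < a := hrest k hk'
      have hbr : ∀ i ∈ rest, i < m + rest.length := by
        intro i hi
        have h1 := hrest i hi
        have h2 := hb a (List.mem_cons_self)
        simp only [List.length_cons] at h2
        omega
      have hlen' : (pull k rest).length + 1 = rest.length := pull_length hk'
      have IH := X.pullA rest m (pull k rest) rfl hpr hk' hbr hlen' x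
      show X.s (m + rest.length) a (X.sComp m rest x) = _
      rw [IH, X.s_cast]
      have ha1 : a - 1 ≤ m + (pull k rest).length := by
        have := hb a (List.mem_cons_self)
        simp only [List.length_cons] at this
        omega
      have hss := X.ss (m + (pull k rest).length) k (a - 1) (by omega) ha1
        (X.sComp m (pull k rest) x)
      have ha : a - 1 + 1 = a := by omega
      rw [ha] at hss
      rw [← hss]
      rfl

/-- Iterated pull factorization plus bookkeeping. -/
theorem pullsB (X : SGrp) : ∀ (γ : List ℕ) (m : ℕ) (α : List ℕ),
    α.Pairwise (· > ·) → γ.Pairwise (· > ·) → (∀ i ∈ γ, i ∈ α) →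
    (∀ i ∈ α, i < m + α.length) →
    ∃ hl : (pulls γ α).length + γ.length = α.length,
      (pulls γ α).Pairwise (· > ·) ∧
      (∀ i ∈ pulls γ α, i < m + (pulls γ α).length) ∧
      ∀ x : X.G m, X.sComp m α x =
        X.castHom (by omega)
          (X.sComp (m + (pulls γ α).length) γ (X.sComp m (pulls γ α) x))
  | [], m, α, hpα, _, _, hb => by
    refine ⟨by simp [pulls], ?_, ?_, ?_⟩
    · simpa [pulls] using hpα
    · simpa [pulls] using hb
    · intro x
      exact (X.castHom_rfl _ _).symm
  | k :: rest, m, α, hpα, hpγ, hγs, hb => by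
    have hk : k ∈ α := hγs k (List.mem_cons_self)
    have hrk : ∀ j ∈ rest, k > j := fun j hj => (List.pairwise_cons.mp hpγ).1 j hj
    have hprest := (List.pairwise_cons.mp hpγ).2
    have hpp : (pull k α).Pairwise (· > ·) := pull_pairwise hpα hk
    have hlen := pull_length (k := k) (α := α) hk
    have hsub : ∀ i ∈ rest, i ∈ pull k α := by
      intro i hi
      exact (pull_mem hpα hk i).mpr (Or.inr ⟨hrk i hi, hγs i (List.mem_cons_of_mem _ hi)⟩)
    have hbp : ∀ i ∈ pull k α, i < m + (pull k α).length := by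
      intro i hi
      have := pull_bound hpα hk hb i hi
      omega
    obtain ⟨hl', hpw', hb', heq'⟩ := X.pullsB rest m (pull k α) hpp hprest hsub hbp
    have hl : (pulls (k :: rest) α).length + (k :: rest).length = α.length := by
      show (pulls rest (pull k α)).length + _ = _
      simp only [List.length_cons]
      omega
    refine ⟨hl, hpw', fun i hi => hb' i hi, ?_⟩
    intro x
    rw [X.pullA α m (pull k α) rfl hpα hk hb hlen x, heq' x]
    exact X.cast_s_cast _ _ _ _
      (by show _ + (pulls rest (pull k α)).length + rest.length + 1 = _; omega)

/-- Intersections shrink correctly under `pull`. -/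
theorem pull_inter {k : ℕ} {α β : List ℕ} (hpα : α.Pairwise (· > ·))
    (hpβ : β.Pairwise (· > ·)) (hkα : k ∈ α) (hkβ : k ∈ β)
    (hmax : ∀ j, j ∈ α → j ∈ β → j ≤ k) :
    ∀ i, (i ∈ pull k α ∧ i ∈ pull k β) ↔ (i ∈ α ∧ i ∈ β ∧ i < k) := by
  intro i
  rw [pull_mem hpα hkα i, pull_mem hpβ hkβ i]
  constructor
  · rintro ⟨h1 | h1, h2 | h2⟩
    · have := hmax (i + 1) h1.2 h2.2; omega
    · omega
    · omega
    · exact ⟨h1.2, h2.2, h1.1⟩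
  · rintro ⟨h1, h2, h3⟩
    exact ⟨Or.inr ⟨h3, h1⟩, Or.inr ⟨h3, h2⟩⟩

theorem pulls_disjoint : ∀ (γ α β : List ℕ), α.Pairwise (· > ·) → β.Pairwise (· > ·) →
    γ.Pairwise (· > ·) → (∀ i, i ∈ γ ↔ (i ∈ α ∧ i ∈ β)) →
    ∀ i ∈ pulls γ α, i ∉ pulls γ β
  | [], α, β, _, _, _, hγ, i, hiα, hiβ => by
    have := (hγ i).mpr ⟨hiα, hiβ⟩
    simp at this
  | k :: rest, α, β, hpα, hpβ, hpγ, hγ, i, hiα, hiβ => by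
    have hkα : k ∈ α := ((hγ k).mp (List.mem_cons_self)).1
    have hkβ : k ∈ β := ((hγ k).mp (List.mem_cons_self)).2
    have hrk : ∀ j ∈ rest, k > j := fun j hj => (List.pairwise_cons.mp hpγ).1 j hj
    have hmax : ∀ j, j ∈ α → j ∈ β → j ≤ k := by
      intro j hjα hjβ
      have := (hγ j).mpr ⟨hjα, hjβ⟩
      rcases List.mem_cons.mp this with h | h
      · omega
      · have := hrk j h; omega
    have hγ' : ∀ i, i ∈ rest ↔ (i ∈ pull k α ∧ i ∈ pull k β) := by
      intro i
      rw [pull_inter hpα hpβ hkα hkβ hmax i]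
      constructor
      · intro hi
        have h1 := (hγ i).mp (List.mem_cons_of_mem _ hi)
        exact ⟨h1.1, h1.2, hrk i hi⟩
      · rintro ⟨h1, h2, h3⟩
        have := (hγ i).mpr ⟨h1, h2⟩
        rcases List.mem_cons.mp this with h | h
        · omega
        · exact h
    exact pulls_disjoint rest (pull k α) (pull k β) (pull_pairwise hpα hkα)
      (pull_pairwise hpβ hkβ) (List.pairwise_cons.mp hpγ).2 hγ' i hiα hiβ

theorem sMapN_apply (X : SGrp) (N : ℕ) (α : List ℕ) (h : α.length ≤ N)
    (x : X.G (N - α.length)) :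
    X.sMapN N α x = X.castHom (by omega) (X.sComp (N - α.length) α x) := by
  unfold sMapN
  rw [dif_pos (by omega : N - α.length + α.length = N)]
  rfl

end SGrp

/-- Lemma 3.3. If `γ = α ∩ β` is nonempty of length `t`, then
`s_α(x)·s_β(y)·s_α(x)⁻¹ = s_γ(z)` where `z = s_ᾱ(x)·s_β̄(y)·s_ᾱ(x)⁻¹` for some
disjoint `ᾱ, β̄ ∈ S(n-t)` with `#ᾱ = #α - t`, `#β̄ = #β - t`.
(Stated at level `n+1`; `castHom` transports along the equality of dimensions.) -/
theorem stmt9 (X : SGrp) (n : ℕ) (α β γ : List ℕ)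
    (hα : SIdx (n+1) α) (hβ : SIdx (n+1) β)
    (hγ : ∀ i, i ∈ γ ↔ (i ∈ α ∧ i ∈ β))
    (hγd : γ.Chain' (· > ·)) (hγne : γ ≠ [])
    (x : X.G (n+1 - α.length)) (y : X.G (n+1 - β.length)) :
    ∃ (α' β' : List ℕ)
      (h1 : n + 1 - α.length = n + 1 - γ.length - α'.length)
      (h2 : n + 1 - β.length = n + 1 - γ.length - β'.length),
      α'.Chain' (· > ·) ∧ β'.Chain' (· > ·) ∧
      α'.length = α.length - γ.length ∧ β'.length = β.length - γ.length ∧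
      (∀ i ∈ α', i < n + 1 - γ.length) ∧ (∀ i ∈ β', i < n + 1 - γ.length) ∧
      (∀ i ∈ α', i ∉ β') ∧
      X.sMapN (n+1) α x * X.sMapN (n+1) β y * (X.sMapN (n+1) α x)⁻¹ =
        X.sMapN (n+1) γ
          (X.sMapN (n+1-γ.length) α' (X.castHom h1 x) *
           X.sMapN (n+1-γ.length) β' (X.castHom h2 y) *
           (X.sMapN (n+1-γ.length) α' (X.castHom h1 x))⁻¹) := by
  obtain ⟨hαne, hαc, hαlen, hαmem⟩ := hα
  obtain ⟨hβne, hβc, hβlen, hβmem⟩ := hβ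
  have hpα : α.Pairwise (· > ·) := List.isChain_iff_pairwise.mp hαc
  have hpβ : β.Pairwise (· > ·) := List.isChain_iff_pairwise.mp hβc
  have hpγ : γ.Pairwise (· > ·) := List.isChain_iff_pairwise.mp hγd
  have hγα : ∀ i ∈ γ, i ∈ α := fun i hi => ((hγ i).mp hi).1
  have hγβ : ∀ i ∈ γ, i ∈ β := fun i hi => ((hγ i).mp hi).2
  have hbα : ∀ i ∈ α, i < (n+1-α.length) + α.length := fun i hi => by
    have := hαmem i hi; omega
  have hbβ : ∀ i ∈ β, i < (n+1-β.length) + β.length := fun i hi => by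
    have := hβmem i hi; omega
  obtain ⟨hlA, hpwA, hbA, heqA⟩ := X.pullsB γ (n+1-α.length) α hpα hpγ hγα hbα
  obtain ⟨hlB, hpwB, hbB, heqB⟩ := X.pullsB γ (n+1-β.length) β hpβ hpγ hγβ hbβ
  have hγlen : γ.length ≤ n+1 := by omega
  have h1 : n+1-α.length = n+1-γ.length-(pulls γ α).length := by omega
  have h2 : n+1-β.length = n+1-γ.length-(pulls γ β).length := by omega
  refine ⟨pulls γ α, pulls γ β, h1, h2,
    List.isChain_iff_pairwise.mpr hpwA, List.isChain_iff_pairwise.mpr hpwB,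
    by omega, by omega, ?_, ?_, SGrp.pulls_disjoint γ α β hpα hpβ hpγ hγ, ?_⟩
  · intro i hi; have := hbA i hi; omega
  · intro i hi; have := hbB i hi; omega
  · rw [X.sMapN_apply (n+1) α hαlen x, X.sMapN_apply (n+1) β hβlen y,
      X.sMapN_apply (n+1) γ hγlen,
      X.sMapN_apply (n+1-γ.length) (pulls γ α) (by omega) (X.castHom h1 x),
      X.sMapN_apply (n+1-γ.length) (pulls γ β) (by omega) (X.castHom h2 y),
      heqA x, heqB y]
    simp only [map_mul, map_inv, X.sComp_cast, X.castHom_castHom]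
end

section
/- Let G be a simplicial group such that every element of G_2 is a product of degenerate elements (G_2 = D_2). Let N_2 be the normal subgroup of G_2 generated by all F_{(0)(1)}(x,y) = [s_0 x, s_1 y]·[s_1 y, s_1 x] with x, y ∈ NG_1. Then ∂_2(NG_2) = ∂_2(N_2), where ∂_2 : NG_2 → NG_1 is the restriction of d_2. -/
/-!
Put `M = d₂(N₂)`, a normal subgroup of `G₁` because `d₂ s₁ = id`. For `a ∈ ker d₀` and
`b ∈ ker d₁`, the element `x = b⁻¹ s₀d₀b` lies in `NG₁`, and `d₂ F₀₁(x, x⁻¹ax) = [b, a]`;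
hence `[ker d₁, ker d₀] ⊆ M`. Modulo these commutators, `g ↦ d₁g · (d₀g)⁻¹ · s₀d₁d₀g` is a
homomorphism `G₂ → G₁/M`. It agrees with `d₂` on `s₀G₁` and `s₁G₁`, hence on all of `G₂ = D₂`,
and it is trivial on `NG₂`; so `d₂(NG₂) ⊆ M`. Conversely `N₂ ⊆ NG₂`.
-/

open scoped commutatorElement

theorem QuotientGroup.commute_mk_of_commutator_le {G : Type*} [Group G] {H K M : Subgroup G}
    [M.Normal] (h : ⁅H, K⁆ ≤ M) {a b : G} (ha : a ∈ H) (hb : b ∈ K) :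
    Commute (a : G ⧸ M) (b : G ⧸ M) := by
  rw [← commutatorElement_eq_one_iff_commute]
  exact (map_commutatorElement (QuotientGroup.mk' M) a b).symm.trans
    ((QuotientGroup.eq_one_iff _).2 (h (Subgroup.commutator_mem_commutator ha hb)))

namespace SGrp

variable {X : SGrp}

@[simp] lemma d10_s10 (a : X.G 1) : X.d 1 0 (X.s 1 0 a) = a := X.ds_eq 1 0 (by omega) a
@[simp] lemma d11_s10 (a : X.G 1) : X.d 1 1 (X.s 1 0 a) = a := X.ds_succ 1 0 (by omega) a
@[simp] lemma d12_s10 (a : X.G 1) : X.d 1 2 (X.s 1 0 a) = X.s 0 0 (X.d 0 1 a) :=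
  X.ds_gt 0 2 0 (by omega) (by omega) a
@[simp] lemma d10_s11 (b : X.G 1) : X.d 1 0 (X.s 1 1 b) = X.s 0 0 (X.d 0 0 b) :=
  X.ds_lt 0 0 1 (by omega) (by omega) b
@[simp] lemma d11_s11 (b : X.G 1) : X.d 1 1 (X.s 1 1 b) = b := X.ds_eq 1 1 (by omega) b
@[simp] lemma d12_s11 (b : X.G 1) : X.d 1 2 (X.s 1 1 b) = b := X.ds_succ 1 1 (by omega) b
@[simp] lemma d00_s00 (z : X.G 0) : X.d 0 0 (X.s 0 0 z) = z := X.ds_eq 0 0 (by omega) z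
@[simp] lemma d01_s00 (z : X.G 0) : X.d 0 1 (X.s 0 0 z) = z := X.ds_succ 0 0 (by omega) z
lemma d00_d11 (g : X.G 2) : X.d 0 0 (X.d 1 1 g) = X.d 0 0 (X.d 1 0 g) :=
  X.dd 0 0 1 (by omega) (by omega) g

lemma mem_NG_two {z : X.G 2} : z ∈ X.NG 2 ↔ X.d 1 0 z = 1 ∧ X.d 1 1 z = 1 := by
  simp [NG, Finset.mem_range, Nat.le_one_iff_eq_zero_or_eq_one]

instance NG_two_normal : (X.NG 2).Normal where
  conj_mem z hz g := by
    rw [mem_NG_two] at hz ⊢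
    simp [hz.1, hz.2]

lemma d12_surjective : Function.Surjective (X.d 1 2) := fun w => ⟨X.s 1 1 w, d12_s11 w⟩

variable (X) in
def F01 (x y : X.G 1) : X.G 2 := ⁅X.s 1 0 x, X.s 1 1 y⁆ * ⁅X.s 1 1 y, X.s 1 1 x⁆

variable (X) in
def N2 : Subgroup (X.G 2) :=
  Subgroup.normalClosure {g | ∃ x y : X.G 1, X.d 0 0 x = 1 ∧ X.d 0 0 y = 1 ∧ g = X.F01 x y}

lemma F01_mem_NG_two {x y : X.G 1} (hx : X.d 0 0 x = 1) (hy : X.d 0 0 y = 1) :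
    X.F01 x y ∈ X.NG 2 := by
  rw [mem_NG_two]
  constructor
  · simp [F01, hx, hy]
  · rw [F01, map_mul, map_commutatorElement, map_commutatorElement, d11_s10, d11_s11, d11_s11]
    simp only [commutatorElement_def]
    group

lemma N2_le_NG_two : X.N2 ≤ X.NG 2 :=
  Subgroup.normalClosure_le_normal <| by
    rintro _ ⟨x, y, hx, hy, rfl⟩
    exact F01_mem_NG_two hx hy

lemma d12_F01 (x y : X.G 1) :
    X.d 1 2 (X.F01 x y) = ⁅X.s 0 0 (X.d 0 1 x), y⁆ * ⁅y, x⁆ := by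
  simp [F01]

instance N2_map_normal : (X.N2.map (X.d 1 2)).Normal :=
  Subgroup.normalClosure_normal.map _ d12_surjective

lemma commutator_ker_le_map_N2 : ⁅(X.d 0 1).ker, (X.d 0 0).ker⁆ ≤ X.N2.map (X.d 1 2) := by
  rw [Subgroup.commutator_le]
  intro b hb a ha
  rw [MonoidHom.mem_ker] at ha hb
  set x := b⁻¹ * X.s 0 0 (X.d 0 0 b)
  have hx : X.d 0 0 x = 1 := by simp [x]
  have hy : X.d 0 0 (x⁻¹ * a * x) = 1 := by simp [hx, ha]
  have hsx : X.s 0 0 (X.d 0 1 x) = b * x := by simp [x, hb]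
  refine ⟨X.F01 x (x⁻¹ * a * x), Subgroup.subset_normalClosure ⟨_, _, hx, hy, rfl⟩, ?_⟩
  rw [d12_F01, hsx]
  simp only [commutatorElement_def]
  group

section Quotient

variable {M : Subgroup (X.G 1)} [M.Normal]

lemma mk_faces_mul (hM : ⁅(X.d 0 1).ker, (X.d 0 0).ker⁆ ≤ M)
    {u₁ v₁ u₂ v₂ : X.G 1} (h₂ : X.d 0 0 u₂ = X.d 0 0 v₂) :
    ((v₁ * v₂ * (u₁ * u₂)⁻¹ * X.s 0 0 (X.d 0 1 (u₁ * u₂)) : X.G 1) : X.G 1 ⧸ M) =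
      (v₁ * u₁⁻¹ * X.s 0 0 (X.d 0 1 u₁) : X.G 1) *
        (v₂ * u₂⁻¹ * X.s 0 0 (X.d 0 1 u₂) : X.G 1) := by
  set a := v₂ * u₂⁻¹
  set b := u₁⁻¹ * X.s 0 0 (X.d 0 1 u₁)
  have hb : b ∈ (X.d 0 1).ker := by simp [b]
  have ha : a ∈ (X.d 0 0).ker := by simp [a, h₂]
  have hab : v₁ * v₂ * (u₁ * u₂)⁻¹ * X.s 0 0 (X.d 0 1 (u₁ * u₂)) =
      v₁ * (a * b) * X.s 0 0 (X.d 0 1 u₂) := by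
    simp only [a, b, map_mul]; group
  rw [hab, show v₁ * u₁⁻¹ * X.s 0 0 (X.d 0 1 u₁) = v₁ * b by simp only [b]; group]
  simp only [QuotientGroup.mk_mul, ← (QuotientGroup.commute_mk_of_commutator_le hM hb ha).eq]
  group

def d12QuotFormula (hM : ⁅(X.d 0 1).ker, (X.d 0 0).ker⁆ ≤ M) : X.G 2 →* X.G 1 ⧸ M :=
  MonoidHom.mk' (fun g => (X.d 1 1 g * (X.d 1 0 g)⁻¹ * X.s 0 0 (X.d 0 1 (X.d 1 0 g)) : X.G 1))
    fun g h => by simpa only [map_mul] using mk_faces_mul hM (d00_d11 h).symm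

lemma d12QuotFormula_apply (hM : ⁅(X.d 0 1).ker, (X.d 0 0).ker⁆ ≤ M) (g : X.G 2) :
    d12QuotFormula hM g = (X.d 1 1 g * (X.d 1 0 g)⁻¹ * X.s 0 0 (X.d 0 1 (X.d 1 0 g)) : X.G 1) :=
  rfl

lemma mk_comp_d12_eq_d12QuotFormula (hM : ⁅(X.d 0 1).ker, (X.d 0 0).ker⁆ ≤ M)
    (hD : Subgroup.closure (Set.range (X.s 1 0) ∪ Set.range (X.s 1 1)) = ⊤) :
    (QuotientGroup.mk' M).comp (X.d 1 2) = d12QuotFormula hM := by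
  refine MonoidHom.eq_of_eqOn_dense hD ?_
  rintro _ (⟨a, rfl⟩ | ⟨b, rfl⟩) <;> simp [d12QuotFormula_apply]

lemma d12_mem_of_mem_NG_two (hM : ⁅(X.d 0 1).ker, (X.d 0 0).ker⁆ ≤ M)
    (hD : Subgroup.closure (Set.range (X.s 1 0) ∪ Set.range (X.s 1 1)) = ⊤)
    {g : X.G 2} (hg : g ∈ X.NG 2) : X.d 1 2 g ∈ M := by
  obtain ⟨h0, h1⟩ := mem_NG_two.1 hg
  rw [← QuotientGroup.eq_one_iff]
  simpa [d12QuotFormula_apply, h0, h1] using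
    DFunLike.congr_fun (mk_comp_d12_eq_d12QuotFormula hM hD) g

end Quotient

end SGrp

/-- Brown–Loday: if `G_2 = D_2` is generated by the degenerate
elements, then `∂₂(NG_2) = ∂₂(N_2)` where `N_2` is the normal closure of the
elements `F_{(0)(1)}(x,y) = [s₀x, s₁y]·[s₁y, s₁x]`, `x, y ∈ NG_1`. -/
theorem stmt11 (X : SGrp)
    (hD : Subgroup.closure (Set.range (X.s 1 0) ∪ Set.range (X.s 1 1)) =
      (⊤ : Subgroup (X.G 2))) :
    Subgroup.map (X.d 1 2) (X.NG 2) =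
      Subgroup.map (X.d 1 2)
        (Subgroup.normalClosure
          {g : X.G 2 | ∃ x y : X.G 1, X.d 0 0 x = 1 ∧ X.d 0 0 y = 1 ∧
            g = ⁅X.s 1 0 x, X.s 1 1 y⁆ * ⁅X.s 1 1 y, X.s 1 1 x⁆}) := by
  change (X.NG 2).map (X.d 1 2) = X.N2.map (X.d 1 2)
  refine le_antisymm ?_ (Subgroup.map_mono SGrp.N2_le_NG_two)
  rintro _ ⟨g, hg, rfl⟩
  exact SGrp.d12_mem_of_mem_NG_two SGrp.commutator_ker_le_map_N2 hD hg
end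

section
/- Let G be a simplicial group, x ∈ NG_1 and y ∈ NG_2. Then the element F_{(1,0)(2)}(x,y) = [s_1 s_0 x, s_2 y]·[s_2 y, s_2 s_0 x] lies in NG_3 = ∩_{i=0}^{2} Ker(d_i^3). -/
open scoped commutatorElement

/-
The last degeneracy `s₂` kills the faces `d₀, d₁` on Moore chains, since `dᵢ s₂ = s₁ dᵢ` for
`i < 2`; so both commutators vanish under `d₀` and `d₁`. Under `d₂` both `s₁s₀x` and `s₂s₀x`
become `s₀x` and `s₂y` becomes `y`, leaving `[s₀x, y][y, s₀x] = 1`.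
-/

namespace SGrp

variable (X : SGrp)

theorem mem_NG_succ_iff {n : ℕ} {z : X.G (n + 1)} :
    z ∈ X.NG (n + 1) ↔ ∀ i ≤ n, X.d n i z = 1 := by
  simp only [NG, Subgroup.mem_iInf, Finset.mem_range, MonoidHom.mem_ker, Nat.lt_succ_iff]

theorem d_s_last_eq_one_of_mem_NG {n : ℕ} {y : X.G (n + 1)} (hy : y ∈ X.NG (n + 1))
    {i : ℕ} (hi : i ≤ n) : X.d (n + 1) i (X.s (n + 1) (n + 1) y) = 1 := by
  rw [X.ds_lt n i (n + 1) (by omega) le_rfl, (X.mem_NG_succ_iff.mp hy) i hi, map_one]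

end SGrp

theorem commutatorElement_mul_commutatorElement_swap {G : Type*} [Group G] (a b : G) :
    ⁅a, b⁆ * ⁅b, a⁆ = 1 := by
  rw [← commutatorElement_inv, inv_mul_cancel]

theorem stmt15_general (X : SGrp) (x : X.G 1) (y : X.G 2)
    (hy : y ∈ X.NG 2) :
    ⁅X.s 2 1 (X.s 1 0 x), X.s 2 2 y⁆ * ⁅X.s 2 2 y, X.s 2 2 (X.s 1 0 x)⁆ ∈ X.NG 3 := by
  rw [X.mem_NG_succ_iff]
  intro i hi
  rw [map_mul, map_commutatorElement, map_commutatorElement]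
  rcases hi.lt_or_eq with hi | rfl
  · rw [X.d_s_last_eq_one_of_mem_NG hy (Nat.lt_succ_iff.mp hi), commutatorElement_one_right,
      commutatorElement_one_left, mul_one]
  · rw [X.ds_succ 2 1 (by norm_num), X.ds_eq 2 2 le_rfl, X.ds_eq 2 2 le_rfl,
      commutatorElement_mul_commutatorElement_swap]

/-- for `x ∈ NG_1` and `y ∈ NG_2`,
`F_{(1,0)(2)}(x,y) = [s₁s₀x, s₂y]·[s₂y, s₂s₀x] ∈ NG_3`. -/
theorem stmt15 (X : SGrp) (x : X.G 1) (y : X.G 2)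
    (hx : x ∈ X.NG 1) (hy : y ∈ X.NG 2) :
    ⁅X.s 2 1 (X.s 1 0 x), X.s 2 2 y⁆ * ⁅X.s 2 2 y, X.s 2 2 (X.s 1 0 x)⁆ ∈ X.NG 3 :=
  stmt15_general X x y hy
end
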